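/- arXiv:1407.5743 — 3 statements merged into one kernel-verified Lean document; each statement's English description precedes it below -/
import Mathlib

section
/- Let X and Y be topological spaces, (Z, λ) an equiconnected space, (I, ≤) a well-ordered set, (f_i)_{i∈I} a family of continuous maps f_i : Y → Z, and (φ_i)_{i∈I} a locally finite partition of unity on X. Then the mapping f : X × Y → Z given by f(x,y) = Σ^λ_{i∈I} φ_i(x) f_i(y) is continuous. -/
/-!
Near a point `x₀` only finitely many `φ i` are nonzero; list their indices increasingly as
`j 0 < ⋯ < j k`. Deleting entries of weight zero does not change `λ_n` (for weights in the
simplex), so on a neighbourhood `U × Y` the λ-sum is `λ_{k+1}(f_{j 0}(y), …; φ_{j 0}(x), …)`,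
and it remains to see that `λ_{n+1}` is continuous on `Z^{n+1} × S_{n+1}`. By induction,
`λ_{n+2}(x, α) = λ_{n+1}(λ(x₁, x₂, t), x₃, …; α₁ + α₂, α₃, …)` with `t = α₂ / (α₁ + α₂)`.
Where `α₁ + α₂ > 0` this `t` depends continuously on `α`; where `α₁ + α₂ = 0` the right-hand
side does not depend on `t ∈ [0,1]`, and compactness of `[0,1]` (the tube lemma) gives
continuity there as well.
-/

open Set Function Filter Topology

universe u

/-- An *equiconnecting* map on `Z`: a map `λ : Z × Z × [0,1] → Z`, continuous on
`Z × Z × [0,1]`, with `λ(x,y,0) = x`, `λ(x,y,1) = y` and `λ(x,x,t) = x`. -/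
structure IsEquiconnecting {Z : Type*} [TopologicalSpace Z] (lam : Z → Z → ℝ → Z) : Prop where
  continuousOn : ContinuousOn (fun p : Z × Z × ℝ => lam p.1 p.2.1 p.2.2)
    (Set.univ ×ˢ Set.univ ×ˢ Set.Icc (0 : ℝ) 1)
  map_zero : ∀ x y : Z, lam x y 0 = x
  map_one : ∀ x y : Z, lam x y 1 = y
  map_diag : ∀ x : Z, ∀ t ∈ Set.Icc (0 : ℝ) 1, lam x x t = x

/-- `lambdaIter lam n` is the map `λ_{n+1} : Z^{n+1} × S_{n+1} → Z` from the paper,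
defined recursively. -/
noncomputable def lambdaIter {Z : Type*} (lam : Z → Z → ℝ → Z) :
    (n : ℕ) → (Fin (n + 1) → Z) → (Fin (n + 1) → ℝ) → Z
  | 0, x, _ => x 0
  | n + 1, x, a =>
      if 0 < a 0 + a 1 then
        lambdaIter lam n
          (Fin.cons (lam (x 0) (x 1) (a 1 / (a 0 + a 1))) fun i => x i.succ.succ)
          (Fin.cons (a 0 + a 1) fun i => a i.succ.succ)
      else
        lambdaIter lam n (fun i => x i.succ) fun i => a i.succ

/-- `lambdaIterSet lam A n` is the set `λ^n(A)`:  `λ^0(A) = A` and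
`λ^{n+1}(A) = λ(λ^n(A) × A × [0,1])`. -/
def lambdaIterSet {Z : Type*} (lam : Z → Z → ℝ → Z) (A : Set Z) : ℕ → Set Z
  | 0 => A
  | n + 1 => (fun p : Z × Z × ℝ => lam p.1 p.2.1 p.2.2) ''
      (lambdaIterSet lam A n ×ˢ A ×ˢ Set.Icc (0 : ℝ) 1)

/-- `λ^∞(A) = ⋃_{n ≥ 1} λ^n(A)`. -/
def lambdaInftySet {Z : Type*} (lam : Z → Z → ℝ → Z) (A : Set Z) : Set Z :=
  ⋃ n : ℕ, lambdaIterSet lam A (n + 1)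

/-- An equiconnected space `(Z, λ)` is locally convex if every point has arbitrarily small
neighborhoods `V` with `λ^∞(V)` inside a given neighborhood. -/
def IsLocallyConvexEquiconnected {Z : Type*} [TopologicalSpace Z] (lam : Z → Z → ℝ → Z) :
    Prop :=
  ∀ z : Z, ∀ U ∈ nhds z, ∃ V ∈ nhds z, lambdaInftySet lam V ⊆ U

/-- A map is Baire-one if it is the pointwise limit of a sequence of continuous maps. -/
def BaireOne {Y Z : Type*} [TopologicalSpace Y] [TopologicalSpace Z] (g : Y → Z) : Prop :=
  ∃ h : ℕ → Y → Z, (∀ n, Continuous (h n)) ∧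
    ∀ y, Filter.Tendsto (fun n => h n y) Filter.atTop (nhds (g y))

/-- A locally finite partition of unity on `X`: continuous `[0,1]`-valued functions whose
supports (closures of the sets where they are nonzero) form a locally finite family and whose
pointwise sum is `1`. -/
def IsLocFinPartitionOfUnity {I X : Type*} [TopologicalSpace X] (φ : I → X → ℝ) : Prop :=
  (∀ i, Continuous (φ i)) ∧ (∀ i x, φ i x ∈ Set.Icc (0 : ℝ) 1) ∧
    (LocallyFinite fun i => closure (Function.support (φ i))) ∧ ∀ x, ∑ᶠ i, φ i x = 1

/-- A strong PP-space: for every dense `D ⊆ X` there are a sequence of locally finite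
partitions of unity and families of points of `D` such that points attached to the supports
containing `x` converge to `x` uniformly in the index, in the sense of condition (3). -/
def IsStrongPPSpace (X : Type*) [TopologicalSpace X] : Prop :=
  ∀ D : Set X, Dense D →
    ∃ (I : ℕ → Type u) (φ : ∀ n, I n → X → ℝ) (p : ∀ n, I n → X),
      (∀ n, IsLocFinPartitionOfUnity (φ n)) ∧ (∀ n i, p n i ∈ D) ∧
      ∀ x : X, ∀ U ∈ nhds x, ∃ n₀ : ℕ, ∀ n ≥ n₀, ∀ i : I n,
        x ∈ closure (Function.support (φ n i)) → p n i ∈ U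

/-- A zero set: the preimage of `{0}` under a continuous function `X → [0,1]`. -/
def IsZeroSet {X : Type*} [TopologicalSpace X] (A : Set X) : Prop :=
  ∃ f : X → ℝ, Continuous f ∧ (∀ x, f x ∈ Set.Icc (0 : ℝ) 1) ∧ A = f ⁻¹' {0}

/-- A cozero set: the preimage of `(0,1]` under a continuous function `X → [0,1]`. -/
def IsCozeroSet {X : Type*} [TopologicalSpace X] (A : Set X) : Prop :=
  ∃ f : X → ℝ, Continuous f ∧ (∀ x, f x ∈ Set.Icc (0 : ℝ) 1) ∧ A = f ⁻¹' Set.Ioc (0 : ℝ) 1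

/-- A functionally ambiguous set: simultaneously a countable union of zero sets and a
countable intersection of cozero sets. -/
def IsFunctionallyAmbiguous {X : Type*} [TopologicalSpace X] (A : Set X) : Prop :=
  (∃ F : ℕ → Set X, (∀ n, IsZeroSet (F n)) ∧ A = ⋃ n, F n) ∧
    ∃ B : ℕ → Set X, (∀ n, IsCozeroSet (B n)) ∧ A = ⋂ n, B n

/-- A discrete family of sets: every point has a neighborhood meeting at most one member. -/
def IsDiscreteFamily {I X : Type*} [TopologicalSpace X] (A : I → Set X) : Prop :=
  ∀ x : X, ∃ U ∈ nhds x, {i : I | (U ∩ A i).Nonempty}.Subsingleton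

/-- Weakly collectionwise normal: every discrete family of zero sets can be separated by a
discrete family of cozero sets. -/
def WeaklyCollectionwiseNormal (X : Type*) [TopologicalSpace X] : Prop :=
  ∀ (S : Type u) (F : S → Set X), (∀ s, IsZeroSet (F s)) → IsDiscreteFamily F →
    ∃ U : S → Set X, (∀ s, IsCozeroSet (U s)) ∧ IsDiscreteFamily U ∧ ∀ s, F s ⊆ U s

/-- A contracting structure on `Z`: a continuous `γ : Z × [0,1] → Z` with `γ(z,0) = z` and
`γ(z,1) = z₀`. -/
structure IsContracting {Z : Type*} [TopologicalSpace Z] (γ : Z → ℝ → Z) (z₀ : Z) :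
    Prop where
  continuousOn : ContinuousOn (fun p : Z × ℝ => γ p.1 p.2) (Set.univ ×ˢ Set.Icc (0 : ℝ) 1)
  map_zero : ∀ z : Z, γ z 0 = z
  map_one : ∀ z : Z, γ z 1 = z₀

section StdSimplex

variable {n : ℕ}

theorem comp_succAbove_mem_stdSimplex {a : Fin (n + 1) → ℝ}
    (ha : a ∈ stdSimplex ℝ (Fin (n + 1))) {m : Fin (n + 1)} (hm : a m = 0) :
    a ∘ m.succAbove ∈ stdSimplex ℝ (Fin n) :=
  ⟨fun i => ha.1 _, by rw [← ha.2, Fin.sum_univ_succAbove a m, hm, zero_add]; rfl⟩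

theorem cons_add_mem_stdSimplex {a : Fin (n + 2) → ℝ}
    (ha : a ∈ stdSimplex ℝ (Fin (n + 2))) :
    (Fin.cons (a 0 + a 1) (Fin.tail (Fin.tail a)) : Fin (n + 1) → ℝ) ∈
      stdSimplex ℝ (Fin (n + 1)) := by
  refine ⟨fun i => ?_, ?_⟩
  · cases i using Fin.cases
    · exact add_nonneg (ha.1 0) (ha.1 1)
    · exact ha.1 _
  · rw [← ha.2, Fin.sum_univ_succ, Fin.sum_univ_succ a, Fin.sum_univ_succ (fun i => a i.succ)]
    simp only [Fin.cons_zero, Fin.cons_succ, Fin.tail, Fin.succ_zero_eq_one, add_assoc]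

end StdSimplex

section DeleteZeroWeights

variable {Z : Type*} {lam : Z → Z → ℝ → Z} {n : ℕ}
  {x : Fin (n + 2) → Z} {a : Fin (n + 2) → ℝ}

theorem lambdaIter_succ_of_pos (h : 0 < a 0 + a 1) :
    lambdaIter lam (n + 1) x a =
      lambdaIter lam n (Fin.cons (lam (x 0) (x 1) (a 1 / (a 0 + a 1))) (Fin.tail (Fin.tail x)))
        (Fin.cons (a 0 + a 1) (Fin.tail (Fin.tail a))) := by
  rw [lambdaIter, if_pos h]; rfl

theorem lambdaIter_succ_of_nonpos (h : a 0 + a 1 ≤ 0) :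
    lambdaIter lam (n + 1) x a = lambdaIter lam n (Fin.tail x) (Fin.tail a) := by
  rw [lambdaIter, if_neg h.not_gt]; rfl

theorem lambdaIter_succ_of_apply_zero_eq_zero (h1 : ∀ x y, lam x y 1 = y) (ha0 : a 0 = 0) :
    lambdaIter lam (n + 1) x a = lambdaIter lam n (Fin.tail x) (Fin.tail a) := by
  rcases le_or_gt (a 0 + a 1) 0 with h | h
  · exact lambdaIter_succ_of_nonpos h
  · have ha1 : a 1 ≠ 0 := by linarith
    rw [lambdaIter_succ_of_pos h, ha0, zero_add, div_self ha1, h1]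
    congr <;> exact Fin.cons_self_tail (Fin.tail _)

theorem lambdaIter_succ_eq_comp_succAbove_zero (h1 : ∀ x y, lam x y 1 = y) (ha0 : a 0 = 0) :
    lambdaIter lam (n + 1) x a =
      lambdaIter lam n (x ∘ Fin.succAbove 0) (a ∘ Fin.succAbove 0) := by
  rw [Fin.succAbove_zero]
  exact lambdaIter_succ_of_apply_zero_eq_zero h1 ha0

theorem lambdaIter_succ_eq_comp_succAbove_one (h0 : ∀ x y, lam x y 0 = x)
    (h1 : ∀ x y, lam x y 1 = y) (ha : a ∈ stdSimplex ℝ (Fin (n + 2))) (ha1 : a 1 = 0) :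
    lambdaIter lam (n + 1) x a =
      lambdaIter lam n (x ∘ Fin.succAbove 1) (a ∘ Fin.succAbove 1) := by
  rcases (ha.1 0).lt_or_eq with ha0 | ha0
  · rw [lambdaIter_succ_of_pos (by rwa [ha1, add_zero]), ha1, zero_div, add_zero, h0]
    congr <;> ext m <;> cases m using Fin.cases <;> rfl
  cases n with
  | zero => simpa [Fin.sum_univ_two, ← ha0, ha1] using ha.2
  | succ n =>
    rw [lambdaIter_succ_of_apply_zero_eq_zero h1 ha0.symm,
      lambdaIter_succ_of_apply_zero_eq_zero h1 ha1,
      lambdaIter_succ_of_apply_zero_eq_zero h1 (a := a ∘ Fin.succAbove 1) ha0.symm]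
    rfl

theorem lambdaIter_succ_eq_comp_succAbove (h0 : ∀ x y, lam x y 0 = x)
    (h1 : ∀ x y, lam x y 1 = y) (ha : a ∈ stdSimplex ℝ (Fin (n + 2))) {m : Fin (n + 2)}
    (hm : a m = 0) :
    lambdaIter lam (n + 1) x a = lambdaIter lam n (x ∘ m.succAbove) (a ∘ m.succAbove) := by
  induction n with
  | zero =>
    fin_cases m
    exacts [lambdaIter_succ_eq_comp_succAbove_zero h1 hm,
      lambdaIter_succ_eq_comp_succAbove_one h0 h1 ha hm]
  | succ n ih =>
    obtain rfl | ⟨m, rfl⟩ := m.eq_zero_or_eq_succ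
    · exact lambdaIter_succ_eq_comp_succAbove_zero h1 hm
    obtain rfl | ⟨k, rfl⟩ := m.eq_zero_or_eq_succ
    · exact lambdaIter_succ_eq_comp_succAbove_one h0 h1 ha hm
    -- deleting an entry behind the first two commutes with the step that merges them
    have hσ0 : k.succ.succ.succAbove 0 = 0 := Fin.succ_succAbove_zero _
    have hσ1 : k.succ.succ.succAbove 1 = 1 := Fin.succ_succAbove_one _
    rcases le_or_gt (a 0 + a 1) 0 with hle | hpos
    · have ha0 : a 0 = 0 := by linarith [ha.1 0, ha.1 1]
      have hta : Fin.tail a ∈ stdSimplex ℝ (Fin (n + 2)) := by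
        have := comp_succAbove_mem_stdSimplex ha ha0
        rwa [Fin.succAbove_zero] at this
      rw [lambdaIter_succ_of_nonpos hle,
        lambdaIter_succ_of_nonpos (a := a ∘ _) (by simpa [hσ0, hσ1] using hle),
        ih hta (m := k.succ) hm]
      congr 1 <;> ext i <;> simp [Fin.tail, Fin.succ_succAbove_succ]
    · rw [lambdaIter_succ_of_pos hpos,
        lambdaIter_succ_of_pos (a := a ∘ _) (by simpa [hσ0, hσ1] using hpos),
        ih (cons_add_mem_stdSimplex ha) (m := k.succ) hm]
      congr 1 <;> ext i <;> cases i using Fin.cases <;>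
        simp [Fin.tail, hσ0, hσ1, Fin.succ_succAbove_succ]

theorem lambdaIter_cons_eq_succ_of_add_eq_zero (h1 : ∀ x y, lam x y 1 = y)
    (ha : a ∈ stdSimplex ℝ (Fin (n + 2))) (h : a 0 + a 1 = 0) (z : Z) :
    lambdaIter lam n (Fin.cons z (Fin.tail (Fin.tail x)))
      (Fin.cons (a 0 + a 1) (Fin.tail (Fin.tail a))) = lambdaIter lam (n + 1) x a := by
  obtain ⟨ha0, ha1⟩ : a 0 = 0 ∧ a 1 = 0 := by constructor <;> linarith [ha.1 0, ha.1 1]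
  cases n with
  | zero => simpa [Fin.sum_univ_two, ha0, ha1] using ha.2
  | succ n =>
    rw [lambdaIter_succ_of_apply_zero_eq_zero h1 h, lambdaIter_succ_of_nonpos h.le,
      lambdaIter_succ_of_apply_zero_eq_zero h1 ha1]
    rfl

theorem lambdaIter_eq_comp_of_strictMono_of_surjective {k l : ℕ} {x : Fin (k + 1) → Z}
    {a : Fin (k + 1) → ℝ} {e : Fin (l + 1) → Fin (k + 1)} (he : StrictMono e)
    (hsurj : Surjective e) :
    lambdaIter lam k x a = lambdaIter lam l (x ∘ e) (a ∘ e) := by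
  obtain rfl : l = k := by simpa using Fintype.card_of_bijective ⟨he.injective, hsurj⟩
  obtain rfl : e = id := (he.range_inj strictMono_id).1 (by rw [hsurj.range_eq, range_id])
  rfl

theorem lambdaIter_eq_comp_of_strictMono (h0 : ∀ x y, lam x y 0 = x) (h1 : ∀ x y, lam x y 1 = y)
    {k l : ℕ} {x : Fin (k + 1) → Z} {a : Fin (k + 1) → ℝ}
    (ha : a ∈ stdSimplex ℝ (Fin (k + 1))) {e : Fin (l + 1) → Fin (k + 1)} (he : StrictMono e)
    (hsupp : ∀ m, a m ≠ 0 → m ∈ range e) :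
    lambdaIter lam k x a = lambdaIter lam l (x ∘ e) (a ∘ e) := by
  induction k generalizing l with
  | zero =>
    exact lambdaIter_eq_comp_of_strictMono_of_surjective he fun m =>
      ⟨0, Subsingleton.elim (α := Fin 1) _ _⟩
  | succ k ih =>
    by_cases hsurj : Surjective e
    · exact lambdaIter_eq_comp_of_strictMono_of_surjective he hsurj
    obtain ⟨m₀, hm₀⟩ := not_forall.1 hsurj
    have ha₀ : a m₀ = 0 := not_not.1 fun h => hm₀ (hsupp m₀ h)
    obtain ⟨e', rfl⟩ : ∃ e', e = m₀.succAbove ∘ e' := by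
      rw [← range_subset_range_iff_exists_comp, Fin.range_succAbove]
      rintro _ ⟨i, rfl⟩ rfl
      exact hm₀ ⟨i, rfl⟩
    have he' : StrictMono e' := fun i j hij =>
      (Fin.strictMono_succAbove m₀).lt_iff_lt.1 (he hij)
    have hsupp' : ∀ m, (a ∘ m₀.succAbove) m ≠ 0 → m ∈ range e' := fun m hm => by
      obtain ⟨i, hi⟩ := hsupp _ hm
      exact ⟨i, Fin.succAbove_right_injective hi⟩
    rw [lambdaIter_succ_eq_comp_succAbove h0 h1 ha ha₀,
      ih (comp_succAbove_mem_stdSimplex ha ha₀) he' hsupp']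
    rfl

end DeleteZeroWeights

theorem ContinuousOn.continuousWithinAt_comp_of_isCompact {α β γ : Type*} [TopologicalSpace α]
    [TopologicalSpace β] [TopologicalSpace γ] {G : α × β → γ} {s : Set α} {K : Set β}
    (hG : ContinuousOn G (s ×ˢ K)) (hK : IsCompact K) {τ : α → β} (hτ : MapsTo τ s K)
    {p : α} (hp : p ∈ s) (hconst : ∀ t ∈ K, G (p, t) = G (p, τ p)) :
    ContinuousWithinAt (fun q => G (q, τ q)) s p := by
  refine fun W hW => mem_map.2 ?_
  have hnear : ∀ᶠ q in 𝓝 p, ∀ t ∈ K, (q, t) ∈ s ×ˢ K → G (q, t) ∈ W :=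
    hK.eventually_forall_of_forall_eventually fun t ht =>
      eventually_nhdsWithin_iff.1 (hG (p, t) ⟨hp, ht⟩ (by rwa [hconst t ht]))
  filter_upwards [mem_nhdsWithin_of_mem_nhds hnear, self_mem_nhdsWithin] with q hq hqs
  exact hq (τ q) (hτ hqs) ⟨hqs, hτ hqs⟩

theorem continuousOn_lambdaIter {Z : Type*} [TopologicalSpace Z] {lam : Z → Z → ℝ → Z}
    (hlam : IsEquiconnecting lam) (n : ℕ) :
    ContinuousOn (fun p : (Fin (n + 1) → Z) × (Fin (n + 1) → ℝ) => lambdaIter lam n p.1 p.2)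
      (univ ×ˢ stdSimplex ℝ (Fin (n + 1))) := by
  induction n with
  | zero => exact ((continuous_apply 0).comp continuous_fst).continuousOn
  | succ n ih =>
    set S := univ ×ˢ stdSimplex ℝ (Fin (n + 2))
    let G : ((Fin (n + 2) → Z) × (Fin (n + 2) → ℝ)) × ℝ → Z := fun q =>
      lambdaIter lam n (Fin.cons (lam (q.1.1 0) (q.1.1 1) q.2) (Fin.tail (Fin.tail q.1.1)))
        (Fin.cons (q.1.2 0 + q.1.2 1) (Fin.tail (Fin.tail q.1.2)))
    let τ : (Fin (n + 2) → Z) × (Fin (n + 2) → ℝ) → ℝ := fun p =>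
      p.2 1 / (p.2 0 + p.2 1)
    have hG : ContinuousOn G (S ×ˢ Icc 0 1) := by
      refine ih.comp (ContinuousOn.prodMk (ContinuousOn.finCons ?_ ?_) ?_) ?_
      · exact hlam.continuousOn.comp
          (by fun_prop : Continuous fun q : ((Fin (n + 2) → Z) × (Fin (n + 2) → ℝ)) × ℝ =>
            (q.1.1 0, q.1.1 1, q.2)).continuousOn
          fun q hq => ⟨trivial, trivial, hq.2⟩
      · exact (continuous_fst.fst.finTail.finTail).continuousOn
      · refine ContinuousOn.finCons ?_ (continuous_fst.snd.finTail.finTail).continuousOn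
        exact (by fun_prop : Continuous fun q : ((Fin (n + 2) → Z) × (Fin (n + 2) → ℝ)) × ℝ
          => q.1.2 0 + q.1.2 1).continuousOn
      · exact fun q hq => ⟨trivial, cons_add_mem_stdSimplex hq.1.2⟩
    have hτ : MapsTo τ S (Icc 0 1) := fun p hp =>
      ⟨div_nonneg (hp.2.1 1) (add_nonneg (hp.2.1 0) (hp.2.1 1)),
        div_le_one_of_le₀ (le_add_of_nonneg_left (hp.2.1 0)) (add_nonneg (hp.2.1 0) (hp.2.1 1))⟩
    have hGτ : ∀ p ∈ S, lambdaIter lam (n + 1) p.1 p.2 = G (p, τ p) := fun p hp => by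
      rcases (add_nonneg (hp.2.1 0) (hp.2.1 1)).lt_or_eq with hpos | hzero
      · exact lambdaIter_succ_of_pos hpos
      · exact (lambdaIter_cons_eq_succ_of_add_eq_zero hlam.map_one hp.2 hzero.symm _).symm
    refine ContinuousOn.congr (fun p hp => ?_) hGτ
    rcases (add_nonneg (hp.2.1 0) (hp.2.1 1)).lt_or_eq with hpos | hzero
    · refine ContinuousWithinAt.comp (f := fun q => (q, τ q)) (hG (p, τ p) ⟨hp, hτ hp⟩)
        (continuousWithinAt_id.prodMk ?_) fun q hq => ⟨hq, hτ hq⟩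
      exact ((continuous_apply 1).comp continuous_snd |>.continuousAt.div
        (by fun_prop) hpos.ne').continuousWithinAt
    · refine hG.continuousWithinAt_comp_of_isCompact isCompact_Icc hτ hp fun t _ => ?_
      simp only [G, lambdaIter_cons_eq_succ_of_add_eq_zero hlam.map_one hp.2 hzero.symm]

theorem Finset.exists_strictMono_fin_succ {α : Type*} [LinearOrder α] {s : Finset α}
    (hs : s.Nonempty) :
    ∃ (k : ℕ) (j : Fin (k + 1) → α), StrictMono j ∧ Set.range j = s := by
  obtain ⟨k, hk⟩ := Nat.exists_eq_succ_of_ne_zero (Finset.card_pos.2 hs).ne'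
  exact ⟨k, s.orderEmbOfFin hk, (s.orderEmbOfFin hk).strictMono, s.range_orderEmbOfFin hk⟩

theorem LocallyFinite.exists_mem_nhds_strictMono {ι X : Type*} [LinearOrder ι]
    [TopologicalSpace X] {s : ι → Set X} (hs : LocallyFinite s) {x : X} {i₀ : ι}
    (hx : x ∈ s i₀) : ∃ U ∈ 𝓝 x, ∃ (k : ℕ) (j : Fin (k + 1) → ι), StrictMono j ∧
      ∀ i, (s i ∩ U).Nonempty → i ∈ range j := by
  obtain ⟨U, hU, hfin⟩ := hs x
  obtain ⟨k, j, hj, hrange⟩ := Finset.exists_strictMono_fin_succ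
    (s := hfin.toFinset) ⟨i₀, hfin.mem_toFinset.2 ⟨x, hx, mem_of_mem_nhds hU⟩⟩
  exact ⟨U, hU, k, j, hj, fun i hi => by rw [hrange, hfin.coe_toFinset]; exact hi⟩

theorem finsum_eq_sum_comp_of_support_subset_range {ι κ M : Type*} [AddCommMonoid M] [Fintype κ]
    {F : ι → M} {j : κ → ι} (hj : Injective j) (h : support F ⊆ range j) :
    ∑ᶠ i, F i = ∑ m, F (j m) := by
  rw [← finsum_mem_univ, finsum_mem_inter_support_eq' F univ (range j) fun i hi => by simp [h hi],
    finsum_mem_range hj, finsum_eq_sum_of_fintype]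

theorem eq_lambdaIter_of_support_subset_range {ι Z : Type*} [LinearOrder ι]
    {lam : Z → Z → ℝ → Z} (h0 : ∀ x y, lam x y 0 = x) (h1 : ∀ x y, lam x y 1 = y)
    {w : ι → ℝ} {z : ι → Z} {s : Z}
    (hs : ∀ (l : ℕ) (e : Fin (l + 1) → ι), StrictMono e → (∀ m, w (e m) ≠ 0) →
      (∀ i, w i ≠ 0 → ∃ m, e m = i) → s = lambdaIter lam l (z ∘ e) (w ∘ e))
    {k : ℕ} {j : Fin (k + 1) → ι} (hj : StrictMono j)
    (hsupp : ∀ i, w i ≠ 0 → i ∈ range j)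
    (hw : w ∘ j ∈ stdSimplex ℝ (Fin (k + 1))) :
    s = lambdaIter lam k (z ∘ j) (w ∘ j) := by
  obtain ⟨m₁, -, hm₁⟩ := Finset.exists_ne_zero_of_sum_ne_zero (hw.2.trans_ne one_ne_zero)
  obtain ⟨l, e, he, hrange⟩ := Finset.exists_strictMono_fin_succ
    (s := Finset.univ.filter fun m => w (j m) ≠ 0) ⟨m₁, by simpa using hm₁⟩
  have hmem : ∀ m, m ∈ range e ↔ w (j m) ≠ 0 := fun m => by simp [hrange]
  rw [lambdaIter_eq_comp_of_strictMono h0 h1 hw he fun m hm => (hmem m).2 hm]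
  refine hs l (j ∘ e) (hj.comp he) (fun m => (hmem _).1 ⟨m, rfl⟩) fun i hi => ?_
  obtain ⟨m, rfl⟩ := hsupp i hi
  obtain ⟨m', rfl⟩ := (hmem m).2 hi
  exact ⟨m', rfl⟩

theorem continuous_lambdaSum_of_partitionOfUnity_general {X Y Z I : Type*} [TopologicalSpace X]
    [TopologicalSpace Y] [TopologicalSpace Z] [LinearOrder I]
    (lam : Z → Z → ℝ → Z) (hlam : IsEquiconnecting lam)
    (g : I → Y → Z) (hg : ∀ i, Continuous (g i))
    (φ : I → X → ℝ) (hφ : IsLocFinPartitionOfUnity φ)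
    (f : X × Y → Z)
    (hf : ∀ (x : X) (y : Y) (k : ℕ) (j : Fin (k + 1) → I), StrictMono j →
      (∀ m, φ (j m) x ≠ 0) → (∀ i, φ i x ≠ 0 → ∃ m, j m = i) →
      f (x, y) = lambdaIter lam k (fun m => g (j m) y) fun m => φ (j m) x) :
    Continuous f := by
  obtain ⟨hφc, hφ01, hφlf, hφsum⟩ := hφ
  refine continuous_iff_continuousAt.2 fun ⟨x₀, y₀⟩ => ?_
  obtain ⟨i₀, hi₀⟩ : ∃ i, φ i x₀ ≠ 0 := by
    by_contra! h
    simpa [h] using hφsum x₀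
  obtain ⟨U, hU, k, j, hj, hsupp⟩ := hφlf.exists_mem_nhds_strictMono (subset_closure hi₀)
  have hsuppU : ∀ x ∈ U, ∀ i, φ i x ≠ 0 → i ∈ range j := fun x hx i hi =>
    hsupp i ⟨x, subset_closure hi, hx⟩
  have hsimplex : ∀ x ∈ U, (fun m => φ (j m) x) ∈ stdSimplex ℝ (Fin (k + 1)) := fun x hx =>
    ⟨fun m => (hφ01 _ x).1, by
      rw [← hφsum x, finsum_eq_sum_comp_of_support_subset_range hj.injective (hsuppU x hx)]⟩
  have hUY : U ×ˢ univ ∈ 𝓝 (x₀, y₀) := prod_mem_nhds hU univ_mem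
  have hcont : ContinuousOn (fun p : X × Y =>
      lambdaIter lam k (fun m => g (j m) p.2) fun m => φ (j m) p.1) (U ×ˢ univ) :=
    (continuousOn_lambdaIter hlam k).comp (by fun_prop : Continuous fun p : X × Y =>
      ((fun m => g (j m) p.2), fun m => φ (j m) p.1)).continuousOn
      fun p hp => ⟨trivial, hsimplex p.1 hp.1⟩
  refine (hcont.continuousAt hUY).congr (eventually_of_mem hUY fun p hp => ?_)
  exact (eq_lambdaIter_of_support_subset_range hlam.map_zero hlam.map_one
    (z := fun i => g i p.2) (hf p.1 p.2) hj (hsuppU p.1 hp.1) (hsimplex p.1 hp.1)).symm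

/-- If `(Z, λ)` is an equiconnected space, `(I, ≤)` a well-ordered set,
`(f_i)` a family of continuous maps `Y → Z` and `(φ_i)` a locally finite partition of unity
on `X`, then `f(x,y) = Σ^λ_{i∈I} φ_i(x) f_i(y)` is continuous.  The λ-sum is encoded by the
hypothesis `hf`: whenever `j : Fin (k+1) → I` is the increasing enumeration of the (finite,
nonempty) support `{i | φ_i(x) ≠ 0}`, then
`f(x,y) = λ_{k+1}(f_{j 0}(y),…,f_{j k}(y), φ_{j 0}(x),…,φ_{j k}(x))`. -/
theorem continuous_lambdaSum_of_partitionOfUnity {X Y Z I : Type*} [TopologicalSpace X]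
    [TopologicalSpace Y] [TopologicalSpace Z] [LinearOrder I] [WellFoundedLT I]
    (lam : Z → Z → ℝ → Z) (hlam : IsEquiconnecting lam)
    (g : I → Y → Z) (hg : ∀ i, Continuous (g i))
    (φ : I → X → ℝ) (hφ : IsLocFinPartitionOfUnity φ)
    (f : X × Y → Z)
    (hf : ∀ (x : X) (y : Y) (k : ℕ) (j : Fin (k + 1) → I), StrictMono j →
      (∀ m, φ (j m) x ≠ 0) → (∀ i, φ i x ≠ 0 → ∃ m, j m = i) →
      f (x, y) = lambdaIter lam k (fun m => g (j m) y) fun m => φ (j m) x) :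
    Continuous f :=
  continuous_lambdaSum_of_partitionOfUnity_general lam hlam g hg φ hφ f hf
end

section
/- Let X be a strong PP-space, Y a topological space and (Z, λ) a locally convex equiconnected space. Let f : X × Y → Z be such that the map x ↦ f(x,y) is continuous for every y ∈ Y and the set {x ∈ X : the map y ↦ f(x,y) is Baire-one} is dense in X. Then f is the pointwise limit of a sequence of Baire-one maps X × Y → Z (i.e. f is of the second Baire class, so (X, Y, Z) is a Rudin 1-triple). -/
open Set Function Filter Topology

universe u

/-!
Apply the strong PP property to the dense set of points with Baire-one sections: this gives
locally finite partitions of unity `(φ_{i,n})_i` and points `x_{i,n}` with Baire-one sections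
`f(x_{i,n}, ·)`. Let `g_n(x, y)` be the `λ`-combination of the points `f(x_{i,n}, y)` with the
weights `φ_{i,n}(x)`. Combining the continuous approximants of the sections instead, with the
weights slightly softened so that they stay continuous where they vanish, gives continuous maps
converging to `g_n`; so `g_n` is Baire-one. Given `(x, y)` and a neighborhood `U` of `f(x, y)`,
pick `V` with `λ^∞(V) ⊆ U`. For large `n` every `x_{i,n}` with `x ∈ supp φ_{i,n}` is so close to
`x` that `f(x_{i,n}, y) ∈ V`, and then `g_n(x, y) ∈ λ^∞(V) ⊆ U`.
-/

lemma List.sum_map_filter_ne_zero {I M : Type*} [AddMonoid M] [DecidableEq M] (a : I → M)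
    (l : List I) :
    ((l.filter (a · ≠ 0)).map a).sum = (l.map a).sum := by
  induction l with
  | nil => rfl
  | cons j l ih =>
    by_cases hj : a j = 0
    · rw [List.filter_cons_of_neg (by simpa using hj)]
      simp only [List.map_cons, List.sum_cons, hj, zero_add, ih]
    · rw [List.filter_cons_of_pos (by simpa using hj)]
      simp only [List.map_cons, List.sum_cons, ih]

lemma min_one_div_mem_Icc {a b : ℝ} (ha : 0 ≤ a) (hb : 0 ≤ b) : min 1 (a / b) ∈ Icc (0 : ℝ) 1 :=
  ⟨le_min zero_le_one (div_nonneg ha hb), min_le_left _ _⟩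

section LambdaComb

variable {I Z : Type*} (lam : Z → Z → ℝ → Z) (z₀ : Z)

/-- `λ(⋯λ(λ(z₀, z_{iₙ}, t_{iₙ}), z_{iₙ₋₁}, t_{iₙ₋₁})⋯, z_{i₁}, t_{i₁})` for the list
`[i₁, …, iₙ]`, where `t_i = a_i / (a_i + ⋯ + a_{iₙ})`; thus `t_{iₙ} = 1` and the dummy point `z₀`
is discarded. The denominator is bounded below by `δ`: for `δ > 0` this makes the combination
continuous in the weights, and for `δ` below all weights it changes nothing. -/
noncomputable def lambdaComb (z : I → Z) (a : I → ℝ) (δ : ℝ) : List I → Z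
  | [] => z₀
  | i :: l => lam (lambdaComb z a δ l) (z i) (min 1 (a i / max ((i :: l).map a).sum δ))

variable {lam z₀}

lemma lambdaComb_filter_ne_zero (h0 : ∀ w v, lam w v 0 = w) (z : I → Z) (a : I → ℝ) (δ : ℝ)
    (l : List I) :
    lambdaComb lam z₀ z a δ (l.filter (a · ≠ 0)) = lambdaComb lam z₀ z a δ l := by
  induction l with
  | nil => rfl
  | cons i l ih =>
    by_cases hi : a i = 0
    · rw [List.filter_cons_of_neg (by simpa using hi), ih]
      simp [lambdaComb, hi, h0]
    · rw [List.filter_cons_of_pos (by simpa using hi)]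
      simp only [lambdaComb, List.map_cons, List.sum_cons, List.sum_map_filter_ne_zero, ih]

lemma lambdaComb_eq_of_le (z : I → Z) (a : I → ℝ) {δ : ℝ} (hδ : 0 ≤ δ) (l : List I)
    (ha : ∀ i ∈ l, 0 ≤ a i) (hδa : ∀ i ∈ l, δ ≤ a i) :
    lambdaComb lam z₀ z a δ l = lambdaComb lam z₀ z a 0 l := by
  induction l with
  | nil => rfl
  | cons i l ih =>
    have hsum : δ ≤ ((i :: l).map a).sum := calc
      δ ≤ a i := hδa i (by simp)
      _ ≤ a i + (l.map a).sum :=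
        le_add_of_nonneg_right (List.sum_nonneg (by simpa using fun j hj => ha j (by simp [hj])))
      _ = ((i :: l).map a).sum := by simp
    simp only [lambdaComb, max_eq_left hsum, max_eq_left (hδ.trans hsum)]
    rw [ih (fun j hj => ha j (by simp [hj])) (fun j hj => hδa j (by simp [hj]))]

lemma lambdaComb_mem_lambdaIterSet (h1 : ∀ w v, lam w v 1 = v) {z : I → Z} {a : I → ℝ}
    {V : Set Z} {l : List I} (hl : l ≠ []) (ha : ∀ i ∈ l, 0 < a i) (hz : ∀ i ∈ l, z i ∈ V) :
    ∃ k, lambdaComb lam z₀ z a 0 l ∈ lambdaIterSet lam V k := by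
  induction l with
  | nil => exact absurd rfl hl
  | cons i l ih =>
    rcases eq_or_ne l [] with rfl | hl'
    · refine ⟨0, ?_⟩
      simpa [lambdaComb, lambdaIterSet, max_eq_left (ha i (by simp)).le,
        div_self (ha i (by simp)).ne', h1] using hz i (by simp)
    · obtain ⟨k, hk⟩ :=
        ih hl' (fun j hj => ha j (by simp [hj])) (fun j hj => hz j (by simp [hj]))
      exact ⟨k + 1, (lambdaComb lam z₀ z a 0 l, z i, _),
        ⟨hk, hz i (by simp), min_one_div_mem_Icc (ha i (by simp)).le (le_max_right _ _)⟩, rfl⟩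

lemma lambdaIterSet_subset_lambdaInftySet (h0 : ∀ w v, lam w v 0 = w) (V : Set Z) (k : ℕ) :
    lambdaIterSet lam V k ⊆ lambdaInftySet lam V := by
  cases k with
  | zero =>
    exact fun v hv => mem_iUnion.2 ⟨0, (v, v, 0), ⟨hv, hv, left_mem_Icc.2 zero_le_one⟩, h0 v v⟩
  | succ k => exact subset_iUnion (fun n => lambdaIterSet lam V (n + 1)) k

variable [TopologicalSpace Z]
  (hlam : ContinuousOn (fun p : Z × Z × ℝ => lam p.1 p.2.1 p.2.2) (univ ×ˢ univ ×ˢ Icc 0 1))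
include hlam

lemma continuous_lambdaComb {W : Type*} [TopologicalSpace W] {z : I → W → Z} {a : I → W → ℝ}
    (hz : ∀ i, Continuous (z i)) (ha : ∀ i, Continuous (a i)) (ha0 : ∀ i w, 0 ≤ a i w)
    {δ : ℝ} (hδ : 0 < δ) (l : List I) :
    Continuous fun w => lambdaComb lam z₀ (z · w) (a · w) δ l := by
  induction l with
  | nil => exact continuous_const
  | cons i l ih =>
    have hsum : Continuous fun w => max (((i :: l).map (a · w)).sum) δ :=
      (continuous_list_sum _ fun j _ => ha j).max continuous_const
    have ht : Continuous fun w => min 1 (a i w / max (((i :: l).map (a · w)).sum) δ) :=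
      continuous_const.min ((ha i).div hsum fun w => (hδ.trans_le (le_max_right _ _)).ne')
    exact hlam.comp_continuous (ih.prodMk ((hz i).prodMk ht)) fun w =>
      ⟨mem_univ _, mem_univ _, min_one_div_mem_Icc (ha0 i w) (hδ.le.trans (le_max_right _ _))⟩

lemma continuous_lambdaComb_points {a : I → ℝ} (ha : ∀ i, 0 ≤ a i) (l : List I) :
    Continuous fun z : I → Z => lambdaComb lam z₀ z a 0 l := by
  induction l with
  | nil => exact continuous_const
  | cons i l ih =>
    exact hlam.comp_continuous (ih.prodMk ((continuous_apply i).prodMk continuous_const))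
      fun z => ⟨mem_univ _, mem_univ _, min_one_div_mem_Icc (ha i) (le_max_right _ _)⟩

end LambdaComb

namespace IsLocFinPartitionOfUnity

variable {I X Y Z : Type*} [TopologicalSpace X] {φ : I → X → ℝ}

lemma nonneg (hφ : IsLocFinPartitionOfUnity φ) (i : I) (x : X) : 0 ≤ φ i x := (hφ.2.1 i x).1

lemma finite_ne_zero (hφ : IsLocFinPartitionOfUnity φ) (x : X) : {i | φ i x ≠ 0}.Finite :=
  (hφ.2.2.1.point_finite x).subset fun _ hi => subset_closure hi

variable [LinearOrder I] (hφ : IsLocFinPartitionOfUnity φ)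

noncomputable def activeIndices (x : X) : List I := (hφ.finite_ne_zero x).toFinset.sort

@[simp]
lemma mem_activeIndices {x : X} {i : I} : i ∈ hφ.activeIndices x ↔ φ i x ≠ 0 := by
  simp [activeIndices]

lemma activeIndices_ne_nil (x : X) : hφ.activeIndices x ≠ [] := by
  intro h
  have hzero : ∀ i, φ i x = 0 := fun i => by
    by_contra hi
    simpa [h] using (hφ.mem_activeIndices (x := x) (i := i)).2 hi
  simpa [finsum_eq_zero_of_forall_eq_zero hzero] using hφ.2.2.2 x

lemma activeIndices_eq_filter {T : Finset I} {x : X} (hT : ∀ i, φ i x ≠ 0 → i ∈ T) :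
    hφ.activeIndices x = T.sort.filter (φ · x ≠ 0) := by
  have hsorted := (T.pairwise_sort (· ≤ ·)).filter (fun i => decide (φ i x ≠ 0))
  rw [← (List.toFinset_sort (· ≤ ·) ((T.sort_nodup _).filter _)).2 hsorted, activeIndices]
  congr 1
  ext i
  simpa using fun hi => hT i hi

noncomputable def lambdaGlue (lam : Z → Z → ℝ → Z) (z₀ : Z) (z : I → Y → Z) (δ : ℝ)
    (q : X × Y) : Z :=
  lambdaComb lam z₀ (z · q.2) (φ · q.1) δ (hφ.activeIndices q.1)

variable {lam : Z → Z → ℝ → Z} {z₀ : Z}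

lemma lambdaGlue_mem_lambdaInftySet (h0 : ∀ w v, lam w v 0 = w) (h1 : ∀ w v, lam w v 1 = v)
    {z : I → Y → Z} {V : Set Z} {x : X} {y : Y} (hV : ∀ i, φ i x ≠ 0 → z i y ∈ V) :
    hφ.lambdaGlue lam z₀ z 0 (x, y) ∈ lambdaInftySet lam V := by
  have hpos : ∀ i ∈ hφ.activeIndices x, 0 < φ i x := fun i hi =>
    (hφ.nonneg i x).lt_of_ne (Ne.symm (hφ.mem_activeIndices.1 hi))
  obtain ⟨k, hk⟩ := lambdaComb_mem_lambdaIterSet h1 (hφ.activeIndices_ne_nil x) hpos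
    fun i hi => hV i (hφ.mem_activeIndices.1 hi)
  exact lambdaIterSet_subset_lambdaInftySet h0 V k hk

variable [TopologicalSpace Y] [TopologicalSpace Z]
  (hlam : ContinuousOn (fun p : Z × Z × ℝ => lam p.1 p.2.1 p.2.2) (univ ×ˢ univ ×ˢ Icc 0 1))
  (h0 : ∀ w v, lam w v 0 = w)
include hlam h0

lemma continuous_lambdaGlue {z : I → Y → Z} (hz : ∀ i, Continuous (z i)) {δ : ℝ} (hδ : 0 < δ) :
    Continuous (hφ.lambdaGlue lam z₀ z δ) := by
  refine continuous_iff_continuousAt.2 fun ⟨x, y⟩ => ?_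
  obtain ⟨U, hU, hUfin⟩ := hφ.2.2.1 x
  have hcont : Continuous fun q : X × Y =>
      lambdaComb lam z₀ (z · q.2) (φ · q.1) δ hUfin.toFinset.sort :=
    continuous_lambdaComb hlam (fun i => (hz i).comp continuous_snd)
      (fun i => (hφ.1 i).comp continuous_fst) (fun i q => hφ.nonneg i q.1) hδ _
  -- near `x` only the finitely many supports meeting `U` matter
  refine hcont.continuousAt.congr (eventually_of_mem (prod_mem_nhds hU univ_mem) ?_)
  rintro ⟨x', y'⟩ ⟨hx', -⟩
  have hT : ∀ i, φ i x' ≠ 0 → i ∈ hUfin.toFinset := fun i hi =>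
    hUfin.mem_toFinset.2 ⟨x', subset_closure hi, hx'⟩
  rw [lambdaGlue, hφ.activeIndices_eq_filter hT, lambdaComb_filter_ne_zero h0]

lemma baireOne_lambdaGlue {z : I → Y → Z} (hz : ∀ i, BaireOne (z i)) :
    BaireOne (hφ.lambdaGlue lam z₀ z 0) := by
  choose h hcont hlim using hz
  refine ⟨fun m => hφ.lambdaGlue lam z₀ (fun i => h i m) (1 / ((m : ℝ) + 1)),
    fun m => hφ.continuous_lambdaGlue hlam h0 (fun i => hcont i m) Nat.one_div_pos_of_nat,
    fun ⟨x, y⟩ => ?_⟩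
  have hexact : Tendsto (fun m => lambdaComb lam z₀ (h · m y) (φ · x) 0 (hφ.activeIndices x))
      atTop (𝓝 (hφ.lambdaGlue lam z₀ z 0 (x, y))) :=
    ((continuous_lambdaComb_points hlam (hφ.nonneg · x) _).tendsto _).comp
      (tendsto_pi_nhds.2 fun i => hlim i y)
  have hδ : ∀ᶠ m : ℕ in atTop, ∀ i ∈ {i | φ i x ≠ 0}, 1 / ((m : ℝ) + 1) ≤ φ i x :=
    (eventually_all_finite (hφ.finite_ne_zero x)).2 fun i hi =>
      (tendsto_one_div_add_atTop_nhds_zero_nat.eventually_lt_const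
        ((hφ.nonneg i x).lt_of_ne (Ne.symm hi))).mono fun _ hm => hm.le
  refine hexact.congr' (hδ.mono fun m hm => ?_)
  exact (lambdaComb_eq_of_le _ _ Nat.one_div_pos_of_nat.le _ (fun i _ => hφ.nonneg i x)
    fun i hi => hm i (hφ.mem_activeIndices.1 hi)).symm

end IsLocFinPartitionOfUnity

/-- If `X` is a strong PP-space, `Y` a topological space and `(Z, λ)` a locally
convex equiconnected space, then every `f : X × Y → Z` which is continuous in the first
variable and has Baire-one `y`-sections for a dense set of `x`'s is a pointwise limit of a
sequence of Baire-one maps (hence of the second Baire class), i.e. `(X, Y, Z)` is a Rudin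
`1`-triple. -/
theorem rudin_one_triple_of_strongPP {X Y Z : Type*} [TopologicalSpace X] [TopologicalSpace Y]
    [TopologicalSpace Z] (hX : IsStrongPPSpace.{u} X)
    (lam : Z → Z → ℝ → Z) (hlam : IsEquiconnecting lam)
    (hconv : IsLocallyConvexEquiconnected lam)
    (f : X × Y → Z)
    (hsep : ∀ y : Y, Continuous fun x => f (x, y))
    (hdense : Dense {x : X | BaireOne fun y => f (x, y)}) :
    ∃ g : ℕ → X × Y → Z, (∀ n, BaireOne (g n)) ∧
      ∀ q : X × Y, Filter.Tendsto (fun n => g n q) Filter.atTop (nhds (f q)) := by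
  rcases isEmpty_or_nonempty (X × Y) with _ | ⟨⟨q₀⟩⟩
  · exact ⟨fun _ => f, fun _ => ⟨fun _ => f, fun _ => continuous_of_discreteTopology,
      isEmptyElim⟩, isEmptyElim⟩
  obtain ⟨I, φ, p, hφ, hpD, hPP⟩ := hX _ hdense
  let _ : ∀ n, LinearOrder (I n) := fun _ => IsWellOrder.linearOrder WellOrderingRel
  refine ⟨fun n => (hφ n).lambdaGlue lam (f q₀) (fun i y => f (p n i, y)) 0,
    fun n => (hφ n).baireOne_lambdaGlue hlam.continuousOn hlam.map_zero (hpD n), ?_⟩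
  rintro ⟨x, y⟩ U hU
  obtain ⟨V, hV, hVU⟩ := hconv _ U hU
  obtain ⟨n₀, hn₀⟩ := hPP x _ ((hsep y).continuousAt.preimage_mem_nhds hV)
  exact (eventually_ge_atTop n₀).mono fun n hn => hVU <|
    (hφ n).lambdaGlue_mem_lambdaInftySet hlam.map_zero hlam.map_one
      fun i hi => hn₀ n hn i (subset_closure hi)
end

section
/- Let X be a metrizable space, Y a topological space and (Z, λ) a locally convex equiconnected space. Let f : X × Y → Z be such that the map x ↦ f(x,y) is continuous for every y ∈ Y and the set {x ∈ X : the map y ↦ f(x,y) is continuous} is dense in X. Then f is the pointwise limit of a sequence of continuous maps X × Y → Z. -/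
open Set Function Filter Topology

universe u

/-!
Let `D` be the dense set of points whose `y`-sections are continuous, and for each `n` take
a partition of unity `(ρᵢ)_{i ∈ D}` subordinate to the balls `B(i, 1/(n+1))`. Define
`gₙ(x, y)` as the iterated `λ`-combination of the values `f(i, y)` with weights `ρᵢ(x)`, over
the finitely many `i` active at `x`. Locally this is a combination over a fixed finite list of
continuous points with continuous weights, hence continuous: where the weight accumulated so
far vanishes the combination forgets its current point, and a tube-lemma argument over the
compact path `λ(c, z, [0,1])` controls what happens nearby. For fixed `(x, y)` every active
`i` is within `1/(n+1)` of `x`, so for large `n` all values `f(i, y)` lie in a neighbourhood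
`V` of `f(x, y)` with `λ^∞(V)` inside a prescribed neighbourhood, and `gₙ(x, y) ∈ λ^∞(V)`.
-/

section Combination

variable {Z : Type*} {lam : Z → Z → ℝ → Z}

/-- `λ` with its parameter clamped to `[0, 1]`, hence continuous on all of `Z × Z × ℝ`. -/
noncomputable def clampLam (lam : Z → Z → ℝ → Z) (x y : Z) (t : ℝ) : Z :=
  lam x y (projIcc 0 1 zero_le_one t)

theorem clampLam_projIcc (x y : Z) (t : ℝ) :
    clampLam lam x y (projIcc 0 1 zero_le_one t) = clampLam lam x y t := by
  rw [clampLam, clampLam, projIcc_val]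

/-- The state `(c, s)` is a point with accumulated weight `s`. While `s = 0`, a new point of
weight zero leaves `c` unchanged (as `0 / 0 = 0`) and one of positive weight gets ratio `1`,
so it replaces `c`. -/
noncomputable def combStep (lam : Z → Z → ℝ → Z) (p q : Z × ℝ) : Z × ℝ :=
  (clampLam lam p.1 q.1 (q.2 / (p.2 + q.2)), p.2 + q.2)

theorem lam_mem_lambdaInftySet {V : Set Z} {c z : Z} {t : ℝ} (hc : c ∈ lambdaInftySet lam V)
    (hz : z ∈ V) (ht : t ∈ Icc (0 : ℝ) 1) : lam c z t ∈ lambdaInftySet lam V := by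
  obtain ⟨n, hn⟩ := mem_iUnion.1 hc
  exact mem_iUnion.2 ⟨n + 1, (c, z, t), ⟨hn, hz, ht⟩, rfl⟩

variable [TopologicalSpace Z]

namespace IsEquiconnecting

theorem continuous_clampLam (hlam : IsEquiconnecting lam) :
    Continuous fun p : Z × Z × ℝ => clampLam lam p.1 p.2.1 p.2.2 :=
  hlam.continuousOn.comp_continuous (continuous_fst.prodMk (continuous_snd.fst.prodMk
    (continuous_subtype_val.comp ((continuous_projIcc (h := zero_le_one)).comp
      continuous_snd.snd)))) fun _ => ⟨trivial, trivial, Subtype.prop _⟩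

theorem clampLam_zero (hlam : IsEquiconnecting lam) (x y : Z) : clampLam lam x y 0 = x := by
  rw [clampLam, projIcc_left, hlam.map_zero]

theorem clampLam_one (hlam : IsEquiconnecting lam) (x y : Z) : clampLam lam x y 1 = y := by
  rw [clampLam, projIcc_right, hlam.map_one]

theorem subset_lambdaInftySet (hlam : IsEquiconnecting lam) (V : Set Z) :
    V ⊆ lambdaInftySet lam V := fun v hv =>
  mem_iUnion.2 ⟨0, (v, v, 0), ⟨hv, hv, left_mem_Icc.2 zero_le_one⟩, hlam.map_zero v v⟩

theorem combStep_zero_weight (hlam : IsEquiconnecting lam) (p : Z × ℝ) (z : Z) :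
    combStep lam p (z, 0) = p := by
  rw [combStep, zero_div, hlam.clampLam_zero, add_zero]

theorem combStep_of_fst_zero (hlam : IsEquiconnecting lam) {c : Z} {q : Z × ℝ} (hq : 0 < q.2) :
    combStep lam (c, 0) q = q := by
  rw [combStep, zero_add, div_self hq.ne', hlam.clampLam_one]

theorem foldl_combStep_map_filter (hlam : IsEquiconnecting lam) {ι : Type*} (P : ι → Bool)
    (z : ι → Z) (a : ι → ℝ) :
    ∀ {L : List ι}, (∀ i ∈ L, P i = false → a i = 0) → ∀ p : Z × ℝ,
      ((L.filter P).map fun i => (z i, a i)).foldl (combStep lam) p =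
        (L.map fun i => (z i, a i)).foldl (combStep lam) p
  | [], _, _ => rfl
  | j :: L, hL, p => by
    have ih :=
      foldl_combStep_map_filter hlam P z a fun i hi => hL i (List.mem_cons_of_mem j hi)
    cases hj : P j
    · rw [List.filter_cons_of_neg (by simp [hj]), List.map_cons, List.foldl_cons,
        hL j List.mem_cons_self hj, hlam.combStep_zero_weight, ih]
    · rw [List.filter_cons_of_pos hj, List.map_cons, List.foldl_cons, List.map_cons,
        List.foldl_cons, ih]

theorem foldl_combStep_fst_eq (hlam : IsEquiconnecting lam) :
    ∀ {L : List (Z × ℝ)}, (∀ q ∈ L, 0 ≤ q.2) → 0 < (L.map Prod.snd).sum → ∀ c c' : Z,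
      (L.foldl (combStep lam) (c, 0)).1 = (L.foldl (combStep lam) (c', 0)).1
  | [], _, hpos, _, _ => by simp at hpos
  | q :: L, hL, hpos, c, c' => by
    rcases (hL q List.mem_cons_self).eq_or_lt with hq | hq
    · obtain ⟨z, a⟩ := q
      obtain rfl : a = 0 := hq.symm
      simp only [List.foldl_cons, hlam.combStep_zero_weight]
      exact foldl_combStep_fst_eq hlam (fun r hr => hL r (List.mem_cons_of_mem _ hr))
        (by simpa using hpos) c c'
    · simp only [List.foldl_cons, hlam.combStep_of_fst_zero hq]

theorem foldl_combStep_mem_lambdaInftySet (hlam : IsEquiconnecting lam) {V : Set Z} :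
    ∀ {L : List (Z × ℝ)}, (∀ q ∈ L, q.1 ∈ V ∧ 0 ≤ q.2) → ∀ {p : Z × ℝ}, 0 ≤ p.2 →
      (0 < p.2 → p.1 ∈ lambdaInftySet lam V) → 0 < p.2 + (L.map Prod.snd).sum →
      (L.foldl (combStep lam) p).1 ∈ lambdaInftySet lam V
  | [], _, _, _, hp, hpos => hp (by simpa using hpos)
  | q :: L, hL, p, hp0, hp, hpos => by
    obtain ⟨hqV, hq0⟩ := hL q List.mem_cons_self
    refine foldl_combStep_mem_lambdaInftySet hlam
      (fun r hr => hL r (List.mem_cons_of_mem _ hr)) (add_nonneg hp0 hq0) (fun hpq => ?_)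
      (by simpa [combStep, add_assoc] using hpos)
    rcases hp0.eq_or_lt with hp' | hp'
    · obtain ⟨c, s⟩ := p
      obtain rfl : s = 0 := hp'.symm
      rw [hlam.combStep_of_fst_zero (by simpa [combStep] using hpq)]
      exact hlam.subset_lambdaInftySet V hqV
    · exact lam_mem_lambdaInftySet (hp hp') hqV (Subtype.prop _)

theorem tendsto_clampLam_nhdsSet (hlam : IsEquiconnecting lam) {α : Type*} {l : Filter α}
    {c z : α → Z} {r : α → ℝ} {c₀ z₀ : Z} (hc : Tendsto c l (𝓝 c₀)) (hz : Tendsto z l (𝓝 z₀)) :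
    Tendsto (fun x => clampLam lam (c x) (z x) (r x)) l
      (𝓝ˢ (clampLam lam c₀ z₀ '' Icc 0 1)) := by
  intro O hO
  have hunif : ∀ᶠ p : Z × Z in 𝓝 (c₀, z₀), ∀ t ∈ Icc (0 : ℝ) 1, clampLam lam p.1 p.2 t ∈ O :=
    isCompact_Icc.eventually_forall_of_forall_eventually fun t ht =>
      (hlam.continuous_clampLam.comp (continuous_fst.fst.prodMk
        (continuous_fst.snd.prodMk continuous_snd))).continuousAt.preimage_mem_nhds
        (mem_nhdsSet_iff_forall.1 hO _ (mem_image_of_mem _ ht))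
  refine ((hc.prodMk_nhds hz).eventually hunif).mono fun x hx => ?_
  show clampLam lam (c x) (z x) (r x) ∈ O
  rw [← clampLam_projIcc]
  exact hx _ (Subtype.prop _)

variable {ι W : Type*} [TopologicalSpace W] {S : Set W} {z : ι → W → Z} {a : ι → W → ℝ}

theorem continuousOn_foldl_combStep_prod (hlam : IsEquiconnecting lam) :
    ∀ (L : List ι), (∀ i ∈ L, ContinuousOn (z i) S) → (∀ i ∈ L, ContinuousOn (a i) S) →
      (∀ i ∈ L, ∀ w ∈ S, 0 ≤ a i w) → ∀ {σ : W → ℝ}, ContinuousOn σ S → (∀ w ∈ S, 0 ≤ σ w) →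
      (∀ w ∈ S, 0 < σ w + (L.map fun i => a i w).sum) →
      ContinuousOn (fun p : Z × W =>
        ((L.map fun i => (z i p.2, a i p.2)).foldl (combStep lam) (p.1, σ p.2)).1) (univ ×ˢ S)
  | [], _, _, _, _, _, _, _ => continuous_fst.continuousOn
  | j :: L, hz, ha, ha0, σ, hσ, hσ0, hpos => by
    have hzj := hz j List.mem_cons_self
    have haj := ha j List.mem_cons_self
    set σ' : W → ℝ := fun w => σ w + a j w
    set G : Z × W → Z := fun p =>
      ((L.map fun i => (z i p.2, a i p.2)).foldl (combStep lam) (p.1, σ' p.2)).1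
    have hG : ContinuousOn G (univ ×ˢ S) :=
      continuousOn_foldl_combStep_prod hlam L (fun i hi => hz i (List.mem_cons_of_mem j hi))
        (fun i hi => ha i (List.mem_cons_of_mem j hi))
        (fun i hi => ha0 i (List.mem_cons_of_mem j hi)) (hσ.add haj)
        (fun w hw => add_nonneg (hσ0 w hw) (ha0 j List.mem_cons_self w hw))
        (fun w hw => by simpa [σ', add_assoc] using hpos w hw)
    set m : Z × W → Z := fun p => clampLam lam p.1 (z j p.2) (a j p.2 / σ' p.2)
    show ContinuousOn (fun p => G (m p, p.2)) (univ ×ˢ S)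
    rintro ⟨c₀, w₀⟩ ⟨-, hw₀⟩
    have hsnd : Tendsto Prod.snd (𝓝[univ ×ˢ S] (c₀, w₀)) (𝓝[S] w₀) :=
      continuousWithinAt_snd.tendsto_nhdsWithin fun p hp => hp.2
    rcases (add_nonneg (hσ0 w₀ hw₀) (ha0 j List.mem_cons_self w₀ hw₀)).eq_or_lt with h0 | h0
    · -- The weight accumulated before `L` vanishes at `w₀`, so `G (·, w₀)` is constant and
      -- only the compact set of possible values of `m` near `(c₀, w₀)` matters.
      have hconst : ∀ c, G (c, w₀) = G (c₀, w₀) := by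
        intro c
        have hσ'0 : σ' w₀ = 0 := h0.symm
        simp only [G, hσ'0]
        refine hlam.foldl_combStep_fst_eq (fun q hq => ?_) ?_ c c₀
        · obtain ⟨i, hi, rfl⟩ := List.mem_map.1 hq
          exact ha0 i (List.mem_cons_of_mem j hi) w₀ hw₀
        have := hpos w₀ hw₀
        rw [List.map_cons, List.sum_cons, ← add_assoc, ← h0, zero_add] at this
        rwa [List.map_map]
      set K := clampLam lam c₀ (z j w₀) '' Icc 0 1
      have hK : IsCompact K := isCompact_Icc.image (hlam.continuous_clampLam.comp
        (continuous_const.prodMk (continuous_const.prodMk continuous_id)))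
      have hGK : Tendsto G (𝓝ˢ K ×ˢ 𝓝[S] w₀) (𝓝 (G (c₀, w₀))) := by
        rw [hK.nhdsSet_prod_eq_biSup]
        refine tendsto_iSup.2 fun k => tendsto_iSup.2 fun _ => ?_
        have := hG (k, w₀) ⟨trivial, hw₀⟩
        rwa [ContinuousWithinAt, nhdsWithin_prod_eq, nhdsWithin_univ, hconst] at this
      have hm : Tendsto m (𝓝[univ ×ˢ S] (c₀, w₀)) (𝓝ˢ K) :=
        hlam.tendsto_clampLam_nhdsSet continuousWithinAt_fst
          ((hzj w₀ hw₀).tendsto.comp hsnd)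
      show Tendsto _ _ (𝓝 (G (m (c₀, w₀), w₀)))
      rw [hconst]
      exact hGK.comp (hm.prodMk hsnd)
    · have hm : ContinuousWithinAt m (univ ×ˢ S) (c₀, w₀) :=
        (hlam.continuous_clampLam.tendsto _).comp (continuousWithinAt_fst.prodMk_nhds
          (((hzj w₀ hw₀).tendsto.comp hsnd).prodMk_nhds
            (((haj w₀ hw₀).tendsto.comp hsnd).div
              (((hσ.add haj) w₀ hw₀).tendsto.comp hsnd) h0.ne')))
      exact ContinuousWithinAt.comp (f := fun p : Z × W => (m p, p.2))
        (hG _ ⟨trivial, hw₀⟩)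
        (hm.prodMk continuousWithinAt_snd) fun p hp => ⟨trivial, hp.2⟩

theorem continuousOn_foldl_combStep (hlam : IsEquiconnecting lam) (c : Z) {L : List ι}
    (hz : ∀ i ∈ L, ContinuousOn (z i) S) (ha : ∀ i ∈ L, ContinuousOn (a i) S)
    (ha0 : ∀ i ∈ L, ∀ w ∈ S, 0 ≤ a i w) (hpos : ∀ w ∈ S, 0 < (L.map fun i => a i w).sum) :
    ContinuousOn (fun w => ((L.map fun i => (z i w, a i w)).foldl (combStep lam) (c, 0)).1) S :=
  (hlam.continuousOn_foldl_combStep_prod L hz ha ha0 continuousOn_const (fun _ _ => le_rfl)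
    (by simpa using hpos)).comp (continuous_const.prodMk continuous_id).continuousOn
    fun _ hw => ⟨trivial, hw⟩

end IsEquiconnecting

end Combination

theorem Finset.filter_mem_sort_of_subset {α : Type*} [LinearOrder α] [DecidableEq α]
    {s t : Finset α} (h : s ⊆ t) : t.sort.filter (· ∈ s) = s.sort :=
  ((List.sortedLT_iff_pairwise.2 (t.sortedLT_sort.pairwise.filter _))).eq_of_mem_iff
    s.sortedLT_sort fun x => by simpa using fun hx => h hx

section PartitionOfUnity

variable {ι X Y Z : Type*} [LinearOrder ι] [TopologicalSpace X] [TopologicalSpace Z]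
  {lam : Z → Z → ℝ → Z}

/-- `z₀` is only a placeholder: it is forgotten at the first index, whose weight is positive. -/
noncomputable def partitionComb (lam : Z → Z → ℝ → Z) (z₀ : Z) (ρ : PartitionOfUnity ι X univ)
    (z : ι → Y → Z) (q : X × Y) : Z :=
  (((ρ.finsupport q.1).sort.map fun i => (z i q.2, ρ i q.1)).foldl (combStep lam) (z₀, 0)).1

theorem PartitionOfUnity.sum_sort_eq_one (ρ : PartitionOfUnity ι X univ) {x : X}
    {T : Finset ι} (hT : ρ.finsupport x ⊆ T) : (T.sort.map fun i => ρ i x).sum = 1 := by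
  rw [((T.sort_perm_toList _).map _).sum_eq, Finset.sum_map_toList,
    ρ.sum_finsupport' (mem_univ x) hT]

namespace IsEquiconnecting

theorem partitionComb_eq_of_finsupport_subset (hlam : IsEquiconnecting lam) (z₀ : Z)
    (ρ : PartitionOfUnity ι X univ) (z : ι → Y → Z) {q : X × Y} {T : Finset ι}
    (hT : ρ.finsupport q.1 ⊆ T) :
    partitionComb lam z₀ ρ z q =
      ((T.sort.map fun i => (z i q.2, ρ i q.1)).foldl (combStep lam) (z₀, 0)).1 := by
  classical
  rw [partitionComb, ← Finset.filter_mem_sort_of_subset hT,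
    hlam.foldl_combStep_map_filter _ _ _ fun i _ hi => by simpa using hi]

theorem continuous_partitionComb [TopologicalSpace Y] (hlam : IsEquiconnecting lam) (z₀ : Z)
    (ρ : PartitionOfUnity ι X univ) {z : ι → Y → Z} (hz : ∀ i, Continuous (z i)) :
    Continuous (partitionComb lam z₀ ρ z) := by
  refine continuous_iff_continuousAt.2 fun q₀ => ?_
  set T := ρ.fintsupport q₀.1
  have hS : {x | ρ.finsupport x ⊆ T} ×ˢ univ ∈ 𝓝 q₀ :=
    prod_mem_nhds (ρ.eventually_finsupport_subset q₀.1) univ_mem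
  have hcont : ContinuousOn (fun q : X × Y =>
      ((T.sort.map fun i => (z i q.2, ρ i q.1)).foldl (combStep lam) (z₀, 0)).1)
      ({x | ρ.finsupport x ⊆ T} ×ˢ univ) :=
    hlam.continuousOn_foldl_combStep z₀ (fun i _ => ((hz i).comp continuous_snd).continuousOn)
      (fun i _ => ((ρ i).continuous.comp continuous_fst).continuousOn)
      (fun i _ q _ => ρ.nonneg i q.1)
      fun q hq => (ρ.sum_sort_eq_one hq.1).symm ▸ zero_lt_one
  exact (hcont.continuousAt hS).congr (mem_of_superset hS fun q hq =>
    (hlam.partitionComb_eq_of_finsupport_subset z₀ ρ z hq.1).symm)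

theorem partitionComb_mem_lambdaInftySet (hlam : IsEquiconnecting lam) (z₀ : Z)
    (ρ : PartitionOfUnity ι X univ) (z : ι → Y → Z) {V : Set Z} {q : X × Y}
    (hV : ∀ i ∈ ρ.finsupport q.1, z i q.2 ∈ V) :
    partitionComb lam z₀ ρ z q ∈ lambdaInftySet lam V := by
  refine hlam.foldl_combStep_mem_lambdaInftySet (fun p hp => ?_) le_rfl
    (fun h => absurd h (lt_irrefl 0)) ?_
  · obtain ⟨i, hi, rfl⟩ := List.mem_map.1 hp
    exact ⟨hV i ((Finset.mem_sort _).1 hi), ρ.nonneg i q.1⟩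
  · rw [List.map_map, zero_add]
    exact (ρ.sum_sort_eq_one subset_rfl).symm ▸ zero_lt_one

end IsEquiconnecting

end PartitionOfUnity

theorem exists_partitionOfUnity_isSubordinate_ball {X : Type*} [MetricSpace X] {D : Set X}
    (hD : Dense D) {ε : ℝ} (hε : 0 < ε) :
    ∃ ρ : PartitionOfUnity D X univ, ρ.IsSubordinate fun d => Metric.ball (d : X) ε :=
  PartitionOfUnity.exists_isSubordinate isClosed_univ _ (fun _ => Metric.isOpen_ball)
    fun x _ => by
      obtain ⟨d, hd, hdx⟩ := hD.exists_mem_open Metric.isOpen_ball ⟨x, Metric.mem_ball_self hε⟩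
      exact mem_iUnion.2 ⟨⟨d, hd⟩, Metric.mem_ball_comm.1 hdx⟩

theorem eventually_forall_finsupport_mem {ι X : Type*} [PseudoMetricSpace X] {p : ι → X}
    {ρ : ℕ → PartitionOfUnity ι X univ}
    (hρ : ∀ n, (ρ n).IsSubordinate fun i => Metric.ball (p i) (1 / ((n : ℝ) + 1)))
    (x : X) {s : Set X} (hs : s ∈ 𝓝 x) : ∀ᶠ n in atTop, ∀ i ∈ (ρ n).finsupport x, p i ∈ s := by
  obtain ⟨ε, hε, hball⟩ := Metric.mem_nhds_iff.1 hs
  obtain ⟨N, hN⟩ := exists_nat_one_div_lt hε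
  filter_upwards [eventually_ge_atTop N] with n hn i hi
  have hx : x ∈ Metric.ball (p i) (1 / ((n : ℝ) + 1)) :=
    hρ n i (subset_closure (((ρ n).mem_finsupport x).1 hi))
  exact hball (Metric.mem_ball_comm.1 ((hx.trans_le (Nat.one_div_le_one_div hn)).trans hN))

/-- If `X` is a metrizable space, `Y` a topological space and `(Z, λ)` a locally
convex equiconnected space, then every `f : X × Y → Z` which is continuous in the first
variable and has continuous `y`-sections for a dense set of `x`'s is a pointwise limit of a
sequence of continuous maps. -/
theorem rudin_zero_triple_of_metrizable {X Y Z : Type*} [TopologicalSpace X]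
    [TopologicalSpace.MetrizableSpace X] [TopologicalSpace Y] [TopologicalSpace Z]
    (lam : Z → Z → ℝ → Z) (hlam : IsEquiconnecting lam)
    (hconv : IsLocallyConvexEquiconnected lam)
    (f : X × Y → Z)
    (hsep : ∀ y : Y, Continuous fun x => f (x, y))
    (hdense : Dense {x : X | Continuous fun y => f (x, y)}) :
    ∃ g : ℕ → X × Y → Z, (∀ n, Continuous (g n)) ∧
      ∀ q : X × Y, Filter.Tendsto (fun n => g n q) Filter.atTop (nhds (f q)) := by
  rcases isEmpty_or_nonempty Z with hZ | ⟨⟨z₀⟩⟩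
  · have : IsEmpty (X × Y) := ⟨fun q => hZ.false (f q)⟩
    exact ⟨fun _ => f, fun _ => continuous_of_discreteTopology, isEmptyElim⟩
  let _ := TopologicalSpace.metrizableSpaceMetric X
  set D := {x : X | Continuous fun y => f (x, y)}
  let _ : LinearOrder D := IsWellOrder.linearOrder WellOrderingRel
  choose ρ hρ using fun n : ℕ =>
    exists_partitionOfUnity_isSubordinate_ball hdense (Nat.one_div_pos_of_nat (n := n))
  refine ⟨fun n => partitionComb lam z₀ (ρ n) fun d y => f (d, y),
    fun n => hlam.continuous_partitionComb z₀ (ρ n) fun d => d.2,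
    fun ⟨x, y⟩ => tendsto_def.2 fun U hU => ?_⟩
  obtain ⟨V, hV, hVU⟩ := hconv _ U hU
  filter_upwards [eventually_forall_finsupport_mem hρ x
    ((hsep y).continuousAt.preimage_mem_nhds hV)] with n hn
  exact hVU (hlam.partitionComb_mem_lambdaInftySet z₀ (ρ n) _ hn)
end
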